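/- arXiv:math/0607269 — 2 statements merged into one kernel-verified Lean document; each statement's English description precedes it below -/
import Mathlib

section
/- The map φ_β on geometric squares, sending [aba'b'] to the pair of two-element sets {{[a b_{β+1} a' b'], [a b a' b_{β+1}⁻¹]}, {[a b_{β+1}⁻¹ a' b'], [a b a' b_{β+1}]}}, is well-defined, i.e., it gives the same value on each of the four representatives aba'b', a'b'ab, a⁻¹b'⁻¹a'⁻¹b⁻¹, a'⁻¹b⁻¹a⁻¹b'⁻¹ of a geometric square. -/
open Set

/-- Signed letters: letter index together with a sign (`true` = positive). -/
abbrev V (n : ℕ) := Fin n × Bool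

/-- Formal inversion of a signed letter. -/
def iv {n : ℕ} (x : V n) : V n := (x.1, !x.2)

/-- Oriented squares: tuples (a, b, a', b'). -/
abbrev Tup (α β : ℕ) := V α × V β × V α × V β

/-- The geometric square [aba'b'], as the set of its four representatives. -/
def square {α β : ℕ} (a : V α) (b : V β) (a' : V α) (b' : V β) : Set (Tup α β) :=
  {(a, b, a', b'), (a', b', a, b), (iv a, iv b', iv a', iv b), (iv a', iv b, iv a, iv b')}

/-- The link of a set of geometric squares: the set of (horizontal, vertical)
edges contributed by the corners of the squares. -/
def link {α β : ℕ} (R : Set (Set (Tup α β))) : Set (V α × V β) :=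
  {e | ∃ q ∈ R, ∃ t ∈ q, e = (iv t.1, t.2.1)}

/-- An (α,β)-BM relation: a set of α·β geometric squares whose link is the
complete bipartite graph K_{2α,2β}. -/
def IsBM (α β : ℕ) (R : Set (Set (Tup α β))) : Prop :=
  (∀ q ∈ R, ∃ a b a' b', q = square a b a' b') ∧
  R.ncard = α * β ∧ link R = Set.univ

/-- Embedding of old vertical letters into the enlarged alphabet. -/
def up {β : ℕ} (b : V β) : V (β + 1) := (b.1.castSucc, b.2)

/-- The new vertical letter b_{β+1}. -/
def bn (β : ℕ) : V (β + 1) := (Fin.last β, true)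

/-- Embedding of tuples along `up`. -/
def upT {α β : ℕ} (t : Tup α β) : Tup α (β + 1) :=
  (t.1, up t.2.1, t.2.2.1, up t.2.2.2)

/-- Embedding of a geometric square into the enlarged alphabet. -/
def upSq {α β : ℕ} (q : Set (Tup α β)) : Set (Tup α (β + 1)) := upT '' q

/-- Embedding of a set of geometric squares into the enlarged alphabet. -/
def upR {α β : ℕ} (R : Set (Set (Tup α β))) : Set (Set (Tup α (β + 1))) := upSq '' R

/-- The generator a₁. -/
def a1 : V 1 := (0, true)

/-- ψ_β^{(1)}: adjoin one of the three squares involving only b_{β+1}. -/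
def psi1 (β : ℕ) (R : Set (Set (Tup 1 β))) : Set (Set (Set (Tup 1 (β + 1)))) :=
  (fun s => upR R ∪ {s}) ''
    {square a1 (bn β) (iv a1) (iv (bn β)),
     square a1 (bn β) a1 (iv (bn β)),
     square a1 (bn β) (iv a1) (bn β)}

/-- ψ_β^{(2)}: replace one square [aba'b'] of R by one of the two pairs
{[a b_{β+1} a' b'], [a b a' b_{β+1}⁻¹]} or {[a b_{β+1}⁻¹ a' b'], [a b a' b_{β+1}]}. -/
def psi2 (β : ℕ) (R : Set (Set (Tup 1 β))) : Set (Set (Set (Tup 1 (β + 1)))) :=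
  {U | ∃ a b a' b', square a b a' b' ∈ R ∧
    (U = upR (R \ {square a b a' b'}) ∪
        {square a (bn β) a' (up b'), square a (up b) a' (iv (bn β))} ∨
     U = upR (R \ {square a b a' b'}) ∪
        {square a (iv (bn β)) a' (up b'), square a (up b) a' (bn β)})}

/-- The map ψ_β. -/
def psi (β : ℕ) (R : Set (Set (Tup 1 β))) : Set (Set (Set (Tup 1 (β + 1)))) :=
  psi1 β R ∪ psi2 β R
/-- The map φ_β, sending [aba'b'] to the pair of two-element sets of squares in
the enlarged alphabet. -/
def phi {α β : ℕ} (a : V α) (b : V β) (a' : V α) (b' : V β) :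
    Set (Set (Set (Tup α (β + 1)))) :=
  {{square a (bn β) a' (up b'), square a (up b) a' (iv (bn β))},
   {square a (iv (bn β)) a' (up b'), square a (up b) a' (bn β)}}


lemma iv_iv {n : ℕ} (x : V n) : iv (iv x) = x := by simp [iv]

lemma up_iv {β : ℕ} (b : V β) : up (iv b) = iv (up b) := rfl

lemma square_swap {α β : ℕ} (a a' : V α) (b b' : V β) :
    square a b a' b' = square a' b' a b := by
  ext t; simp [square]; tauto

lemma square_inv {α β : ℕ} (a a' : V α) (b b' : V β) :
    square (iv a) (iv b') (iv a') (iv b) = square a b a' b' := by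
  ext t; simp [square, iv_iv]; tauto

lemma square_inv' {α β : ℕ} (a a' : V α) (c d : V β) :
    square (iv a) c (iv a') d = square a (iv d) a' (iv c) := by
  have := square_inv a a' (iv d) (iv c)
  simpa [iv_iv] using this

lemma phi_swap {α β : ℕ} (a a' : V α) (b b' : V β) : phi a b a' b' = phi a' b' a b := by
  unfold phi
  rw [square_swap a' a (bn β) (up b), square_swap a' a (up b') (iv (bn β)),
      square_swap a' a (iv (bn β)) (up b), square_swap a' a (up b') (bn β),
      Set.pair_comm (square a (up b) a' (bn β)),
      Set.pair_comm (square a (up b) a' (iv (bn β)))]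
  exact Set.pair_comm _ _

lemma phi_inv {α β : ℕ} (a a' : V α) (b b' : V β) :
    phi a b a' b' = phi (iv a) (iv b') (iv a') (iv b) := by
  unfold phi
  rw [square_inv' a a' (bn β) (up (iv b)), square_inv' a a' (up (iv b')) (iv (bn β)),
      square_inv' a a' (iv (bn β)) (up (iv b)), square_inv' a a' (up (iv b')) (bn β)]
  simp only [← up_iv, iv_iv]
  rw [Set.pair_comm (square a (up b) a' (iv (bn β))),
      Set.pair_comm (square a (up b) a' (bn β))]

/-- φ_β is well-defined: it takes the same value on the four representatives
of a geometric square. -/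
theorem phi_well_defined {α β : ℕ} (a a' : V α) (b b' : V β) :
    phi a b a' b' = phi a' b' a b ∧
    phi a b a' b' = phi (iv a) (iv b') (iv a') (iv b) ∧
    phi a b a' b' = phi (iv a') (iv b) (iv a) (iv b') :=
  ⟨phi_swap a a' b b', phi_inv a a' b b',
   (phi_inv a a' b b').trans (phi_swap (iv a) (iv a') (iv b') (iv b))⟩
end

section
/- If R is a (1,β)-BM relation, then adjoining to R any one of the three squares [a₁ b_{β+1} a₁⁻¹ b_{β+1}⁻¹], [a₁ b_{β+1} a₁ b_{β+1}⁻¹], [a₁ b_{β+1} a₁⁻¹ b_{β+1}] yields a (1,β+1)-BM relation, and these three resulting relations are pairwise distinct. -/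
open Set

lemma upT_inj {α β : ℕ} : Function.Injective (upT (α := α) (β := β)) := by
  rintro ⟨a, b, c, d⟩ ⟨a', b', c', d'⟩ h
  simp only [upT, up, Prod.mk.injEq, Fin.castSucc_inj] at h
  obtain ⟨h1, ⟨h2, h3⟩, h4, h5, h6⟩ := h
  simp_all [Prod.ext_iff]

lemma upSq_square {α β : ℕ} (a : V α) (b : V β) (a' : V α) (b' : V β) :
    upSq (square a b a' b') = square a (up b) a' (up b') := by
  simp [upSq, square, upT, iv, up, Set.image_insert_eq, Set.image_singleton]

lemma edge_mem {α β : ℕ} {R : Set (Set (Tup α β))} {q : Set (Tup α β)} {t : Tup α β}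
    (hq : q ∈ R) (ht : t ∈ q) : (iv t.1, t.2.1) ∈ link R := ⟨q, hq, t, ht, rfl⟩

lemma upSq_inj {α β : ℕ} : Function.Injective (upSq (α := α) (β := β)) :=
  Set.image_injective.mpr upT_inj

lemma mem_link_singleton {α β : ℕ} {q : Set (Tup α β)} {t : Tup α β}
    (ht : t ∈ q) : (iv t.1, t.2.1) ∈ link {q} := ⟨q, rfl, t, ht, rfl⟩

lemma sq_notMem_upR {β : ℕ} {R : Set (Set (Tup 1 β))} (a' : V 1) (b' : V (β + 1)) :
    square a1 (bn β) a' b' ∉ upR R := by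
  rintro ⟨q, -, hq⟩
  have h : (a1, bn β, a', b') ∈ upSq q := by
    rw [hq]; exact Or.inl rfl
  obtain ⟨t, -, ht⟩ := h
  have h1 : up t.2.1 = bn β := congrArg (fun p => p.2.1) ht
  have h2 : (t.2.1.1).castSucc = Fin.last β := congrArg Prod.fst h1
  exact absurd h2 (Fin.castSucc_lt_last _).ne

/-- Adjoining to a (1,β)-BM relation any of the three squares involving only
b_{β+1} yields a (1,β+1)-BM relation, and the three results are pairwise
distinct. -/
theorem adjoin_isBM {β : ℕ} (R : Set (Set (Tup 1 β))) (hR : IsBM 1 β R) :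
    (∀ s ∈ ({square a1 (bn β) (iv a1) (iv (bn β)),
              square a1 (bn β) a1 (iv (bn β)),
              square a1 (bn β) (iv a1) (bn β)} : Set (Set (Tup 1 (β + 1)))),
      IsBM 1 (β + 1) (upR R ∪ {s})) ∧
    upR R ∪ {square a1 (bn β) (iv a1) (iv (bn β))} ≠
      upR R ∪ {square a1 (bn β) a1 (iv (bn β))} ∧
    upR R ∪ {square a1 (bn β) (iv a1) (iv (bn β))} ≠
      upR R ∪ {square a1 (bn β) (iv a1) (bn β)} ∧
    upR R ∪ {square a1 (bn β) a1 (iv (bn β))} ≠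
      upR R ∪ {square a1 (bn β) (iv a1) (bn β)} := by
  obtain ⟨hsq, hcard, hlink⟩ := hR
  have hRfin : R.Finite := by
    rcases Nat.eq_zero_or_pos β with h0 | hb
    · subst h0
      have : R = ∅ := by
        ext q
        simp only [mem_empty_iff_false, iff_false]
        intro hq
        obtain ⟨a, b, -⟩ := hsq q hq
        exact b.1.elim0
      simp [this]
    · exact Set.finite_of_ncard_ne_zero (by omega)
  constructor
  · intro s hs
    refine ⟨?_, ?_, ?_⟩
    · rintro q (⟨q', hq', rfl⟩ | rfl)
      · obtain ⟨a, b, a', b', rfl⟩ := hsq q' hq'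
        exact ⟨a, up b, a', up b', upSq_square a b a' b'⟩
      · rcases hs with rfl | rfl | rfl
        · exact ⟨_, _, _, _, rfl⟩
        · exact ⟨_, _, _, _, rfl⟩
        · exact ⟨_, _, _, _, rfl⟩
    · have hnm : s ∉ upR R := by
        rcases hs with rfl | rfl | rfl <;> exact sq_notMem_upR _ _
      rw [Set.union_singleton,
        Set.ncard_insert_of_notMem hnm (hRfin.image _),
        upR, Set.ncard_image_of_injective _ upSq_inj, hcard]
      ring
    · apply Set.eq_univ_of_forall
      rintro ⟨x, y⟩
      obtain ⟨y1, y2⟩ := y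
      rcases Fin.eq_castSucc_or_eq_last y1 with ⟨j, hj⟩ | hj <;> subst hj
      · have : ((x, (j, y2)) : V 1 × V β) ∈ link R := hlink ▸ mem_univ _
        obtain ⟨q, hq, t, ht, he⟩ := this
        refine ⟨upSq q, Or.inl ⟨q, hq, rfl⟩, upT t, ⟨t, ht, rfl⟩, ?_⟩
        have hx : x = iv t.1 := congrArg Prod.fst he
        have hb : ((j, y2) : V β) = t.2.1 := congrArg Prod.snd he
        have h3 : (upT t).2.1 = up t.2.1 := rfl
        rw [hx, h3, ← hb]
        rfl
      · obtain ⟨x1, x2⟩ := x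
        have hx1 : x1 = 0 := Subsingleton.elim _ _
        subst hx1
        have key : ((((0 : Fin 1), x2), (Fin.last β, y2)) : V 1 × V (β + 1)) ∈ link {s} := by
          rcases hs with rfl | rfl | rfl <;> cases x2 <;> cases y2
          · exact ⟨_, rfl, _, Or.inr (Or.inr (Or.inr rfl)), rfl⟩
          · exact ⟨_, rfl, _, Or.inl rfl, rfl⟩
          · exact ⟨_, rfl, _, Or.inr (Or.inl rfl), rfl⟩
          · exact ⟨_, rfl, _, Or.inr (Or.inr (Or.inl rfl)), rfl⟩
          · exact ⟨_, rfl, _, Or.inr (Or.inl rfl), rfl⟩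
          · exact ⟨_, rfl, _, Or.inl rfl, rfl⟩
          · exact ⟨_, rfl, _, Or.inr (Or.inr (Or.inr rfl)), rfl⟩
          · exact ⟨_, rfl, _, Or.inr (Or.inr (Or.inl rfl)), rfl⟩
          · exact ⟨_, rfl, _, Or.inr (Or.inr (Or.inr rfl)), rfl⟩
          · exact ⟨_, rfl, _, Or.inl rfl, rfl⟩
          · exact ⟨_, rfl, _, Or.inr (Or.inr (Or.inl rfl)), rfl⟩
          · exact ⟨_, rfl, _, Or.inr (Or.inl rfl), rfl⟩
        obtain ⟨q, hq, t, ht, he⟩ := key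
        exact ⟨q, Or.inr hq, t, ht, he⟩
  · have key : ∀ (a' c' : V 1) (b' d' : V (β + 1)),
      (a1, bn β, a', b') ∉ square a1 (bn β) c' d' →
      upR R ∪ {square a1 (bn β) a' b'} ≠ upR R ∪ {square a1 (bn β) c' d'} := by
      intro a' c' b' d' hnm h
      have h1 : square a1 (bn β) a' b' ∈ upR R ∪ {square a1 (bn β) c' d'} := by
        rw [← h]; exact Or.inr rfl
      rcases h1 with h1 | h1
      · exact sq_notMem_upR _ _ h1
      · simp only [mem_singleton_iff] at h1
        exact hnm (h1 ▸ (Or.inl rfl : (a1, bn β, a', b') ∈ square a1 (bn β) a' b'))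
    refine ⟨key _ _ _ _ ?_, key _ _ _ _ ?_, key _ _ _ _ ?_⟩ <;>
      simp [square, iv, a1, bn, Prod.ext_iff]
end
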